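/- Let (Ω,T) be a dynamical system, L > 0, N ∈ ℕ. The set of continuous cocycles A : Ω → SL(2,R) satisfying sup over ω ∈ Ω and n ≥ N of (1/n) log‖A_n(ω)‖ < L is open in C(Ω, SL(2,R)) with the uniform topology. -/

import Mathlib

open scoped Matrix.Norms.L2Operator
open Filter Topology MeasureTheory

noncomputable abbrev SL2 := Matrix.SpecialLinearGroup (Fin 2) ℝ

noncomputable instance : MetricSpace SL2 :=
  MetricSpace.induced (fun B => (B : Matrix (Fin 2) (Fin 2) ℝ))
    (fun _ _ h => Subtype.ext h) inferInstance

/-- The `n`-step cocycle iterate `A_n(ω) = A(T^{n-1}ω) ⋯ A(ω)`. -/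
noncomputable def coc {Ω : Type*} (T : Ω → Ω) (A : Ω → SL2) : ℕ → Ω → SL2
  | 0, _ => 1
  | n + 1, ω => coc T A n (T ω) * A ω

/-- `log ‖A_n(ω)‖`, using the operator norm on 2×2 real matrices. -/
noncomputable def cocNorm {Ω : Type*} (T : Ω → Ω) (A : Ω → SL2) (n : ℕ) (ω : Ω) : ℝ :=
  Real.log ‖(coc T A n ω : Matrix (Fin 2) (Fin 2) ℝ)‖

/-- Uniform hyperbolicity: `liminf (1/n) log ‖A_n(ω)‖ ≥ L > 0` uniformly in `ω`. -/
def UniformlyHyperbolic {Ω : Type*} (T : Ω → Ω) (A : Ω → SL2) : Prop :=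
  ∃ L > (0 : ℝ), ∀ ε > (0 : ℝ), ∃ N : ℕ, ∀ n ≥ N, ∀ ω,
    L - ε < (1 / n : ℝ) * cocNorm T A n ω

/-- `(1/n) log ‖A_n(ω)‖ → L` uniformly in `ω`. -/
def TendsUniformlyToConst {Ω : Type*} (T : Ω → Ω) (A : Ω → SL2) (L : ℝ) : Prop :=
  ∀ ε > (0 : ℝ), ∃ N : ℕ, ∀ n ≥ N, ∀ ω,
    |(1 / n : ℝ) * cocNorm T A n ω - L| < ε

/-- A uniform cocycle. -/
def IsUniformCocycle {Ω : Type*} (T : Ω → Ω) (A : Ω → SL2) : Prop :=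
  ∃ L : ℝ, TendsUniformlyToConst T A L

/-- Uniform behavior: uniformly hyperbolic, or `(1/n) log ‖A_n(ω)‖ → 0` uniformly. -/
def HasUniformBehavior {Ω : Type*} (T : Ω → Ω) (A : Ω → SL2) : Prop :=
  UniformlyHyperbolic T A ∨ TendsUniformlyToConst T A 0

/-
The condition at a single time `n` is open, by continuity of `log ‖A_n(ω)‖` in `(A, ω)` and
compactness of `Ω`; so after enlarging `L'` slightly to some `c < L`, the strict inequalities
`log ‖B_n(ω)‖ < c n` for the finitely many `n ∈ [N, 2N)` hold for all `B` near `A`. Since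
`n ↦ log ‖B_n(ω)‖` is subadditive along orbits, these finitely many bounds propagate to
every `n ≥ N` by splitting off blocks of length `N`.
-/

lemma Continuous.eventually_forall_lt {X Y α : Type*} [TopologicalSpace X] [TopologicalSpace Y]
    [CompactSpace Y] [TopologicalSpace α] [LinearOrder α] [OrderClosedTopology α]
    {f : X × Y → α} (hf : Continuous f) {x₀ : X} {c : α} (h : ∀ y, f (x₀, y) < c) :
    ∀ᶠ x in 𝓝 x₀, ∀ y, f (x, y) < c := by
  simpa using isCompact_univ.eventually_forall_of_forall_eventually fun y _ =>
    (hf.tendsto (x₀, y)).eventually (eventually_lt_nhds (h y))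

lemma le_mul_of_subadditive_of_forall_mem_Ico {Ω : Type*} {T : Ω → Ω} {φ : ℕ → Ω → ℝ}
    (hφ : ∀ m n ω, φ (m + n) ω ≤ φ m (T^[n] ω) + φ n ω) {N : ℕ} (hN : 0 < N) {c : ℝ}
    (hc : ∀ n ∈ Finset.Ico N (2 * N), ∀ ω, φ n ω ≤ c * n) :
    ∀ n ≥ N, ∀ ω, φ n ω ≤ c * n := by
  intro n
  induction n using Nat.strong_induction_on with
  | _ n ih =>
    intro hn ω
    by_cases hn2 : n < 2 * N
    · exact hc n (Finset.mem_Ico.2 ⟨hn, hn2⟩) ω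
    obtain ⟨m, rfl⟩ : ∃ m, n = m + N := ⟨n - N, by omega⟩
    calc φ (m + N) ω ≤ φ m (T^[N] ω) + φ N ω := hφ m N ω
      _ ≤ c * m + c * N :=
        add_le_add (ih m (by omega) (by omega) _)
          (hc N (Finset.mem_Ico.2 ⟨le_rfl, by omega⟩) ω)
      _ = c * ↑(m + N) := by push_cast; ring

lemma Matrix.SpecialLinearGroup.norm_coe_pos {n : Type*} [Fintype n] [DecidableEq n]
    [Nonempty n] (g : Matrix.SpecialLinearGroup n ℝ) : 0 < ‖(g : Matrix n n ℝ)‖ :=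
  norm_pos_iff.2 fun h => g.row_ne_zero (Classical.arbitrary n) (by rw [h]; rfl)

lemma continuous_coe_sl2 : Continuous ((↑) : SL2 → Matrix (Fin 2) (Fin 2) ℝ) :=
  Isometry.continuous fun _ _ => rfl

section Cocycle

open Matrix.SpecialLinearGroup

variable {Ω : Type*}

lemma coc_add (T : Ω → Ω) (A : Ω → SL2) (m n : ℕ) (ω : Ω) :
    coc T A (m + n) ω = coc T A m (T^[n] ω) * coc T A n ω := by
  induction n generalizing ω with
  | zero => simp [coc]
  | succ n ih => rw [← add_assoc, coc, coc, ih, Function.iterate_succ_apply, mul_assoc]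

lemma cocNorm_add_le (T : Ω → Ω) (A : Ω → SL2) (m n : ℕ) (ω : Ω) :
    cocNorm T A (m + n) ω ≤ cocNorm T A m (T^[n] ω) + cocNorm T A n ω := by
  rw [cocNorm, cocNorm, cocNorm, coc_add,
    ← Real.log_mul (norm_coe_pos _).ne' (norm_coe_pos _).ne']
  exact Real.log_le_log (norm_coe_pos _) (norm_mul_le _ _)

variable [TopologicalSpace Ω] [LocallyCompactSpace Ω]

lemma continuous_coc (T : C(Ω, Ω)) (n : ℕ) :
    Continuous fun p : C(Ω, SL2) × Ω => (coc T p.1 n p.2 : Matrix (Fin 2) (Fin 2) ℝ) := by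
  induction n with
  | zero => exact continuous_const
  | succ n ih =>
    simp only [coc, Matrix.SpecialLinearGroup.coe_mul]
    exact (ih.comp (continuous_fst.prodMk (T.continuous.comp continuous_snd))).mul
      (continuous_coe_sl2.comp continuous_eval)

lemma continuous_cocNorm (T : C(Ω, Ω)) (n : ℕ) :
    Continuous fun p : C(Ω, SL2) × Ω => cocNorm T p.1 n p.2 :=
  (continuous_coc T n).norm.log fun _ => (norm_coe_pos _).ne'

end Cocycle

theorem isOpen_sup_lt_general {Ω : Type*} [MetricSpace Ω] [CompactSpace Ω]
    (T : Ω ≃ₜ Ω) (L : ℝ) (N : ℕ) (hN : 0 < N) :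
    IsOpen {A : C(Ω, SL2) | ∃ L' < L, ∀ ω, ∀ n ≥ N,
      (1 / n : ℝ) * cocNorm (⇑T) (⇑A) n ω ≤ L'} := by
  have one_div_mul_le_iff {n : ℕ} (hn : N ≤ n) {x a : ℝ} :
      (1 / n : ℝ) * x ≤ a ↔ x ≤ a * n := by
    rw [one_div_mul_eq_div, div_le_iff₀ (by exact_mod_cast hN.trans_le hn)]
  refine isOpen_iff_mem_nhds.2 fun A ⟨L', hL', hA⟩ => ?_
  obtain ⟨c, hL'c, hcL⟩ := exists_between hL'
  have near_A : ∀ᶠ B : C(Ω, SL2) in 𝓝 A,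
      ∀ n ∈ Finset.Ico N (2 * N), ∀ ω, cocNorm T B n ω < c * n := by
    refine (eventually_all_finset _).2 fun n hn => ?_
    have hn : N ≤ n := (Finset.mem_Ico.1 hn).1
    refine (continuous_cocNorm (T : C(Ω, Ω)) n).eventually_forall_lt fun ω => ?_
    calc cocNorm T A n ω ≤ L' * n := (one_div_mul_le_iff hn).1 (hA ω n hn)
      _ < c * n := by gcongr; exact_mod_cast hN.trans_le hn
  filter_upwards [near_A] with B hB
  refine ⟨c, hcL, fun ω n hn => (one_div_mul_le_iff hn).2 ?_⟩
  exact le_mul_of_subadditive_of_forall_mem_Ico (cocNorm_add_le T B) hN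
    (fun n hn ω => (hB n hn ω).le) n hn ω

/-- The set of continuous cocycles `A` with `sup_{ω, n ≥ N} (1/n) log‖A_n(ω)‖ < L`
is open in `C(Ω, SL(2,ℝ))` with the uniform topology. -/
theorem isOpen_sup_lt {Ω : Type*} [MetricSpace Ω] [CompactSpace Ω]
    (T : Ω ≃ₜ Ω) (L : ℝ) (hL : 0 < L) (N : ℕ) (hN : 0 < N) :
    IsOpen {A : C(Ω, SL2) | ∃ L' < L, ∀ ω, ∀ n ≥ N,
      (1 / n : ℝ) * cocNorm (⇑T) (⇑A) n ω ≤ L'} :=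
  isOpen_sup_lt_general T L N hN
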